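/- Let t be any constant satisfying ‖x‖₁ − ‖x*‖₁ ≥ t‖x − x*‖₂ for all x with Ax = y and 0 < ‖x − x*‖₂ ≤ M₀ (with x* the unique ℓ¹ minimizer, and assuming such x exists). Then t ≤ max_{x ∈ ℝ^N} ‖P sgn(x)‖₂ ≤ √N, where P = I − Aᵀ(AAᵀ)⁻¹A. -/

import Mathlib

/-!
Along the segment from `x*` to a feasible `x`, the direction `u = x - x*` lies in `ker A`, where the
projector `P` acts as the identity. Convexity of `‖·‖₁` gives `‖x‖₁ - ‖x*‖₁ ≤ ⟨u, sgn x⟩`, and since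
`P` is symmetric, `⟨u, sgn x⟩ = ⟨u, P sgn x⟩ ≤ ‖u‖₂ ‖P sgn x‖₂` by Cauchy–Schwarz. Dividing the growth
condition by `‖u‖₂ > 0` bounds `t`. Finally `P` is an orthogonal projector, so
`‖P sgn z‖₂ ≤ ‖sgn z‖₂ ≤ √N`.
-/

open Matrix BigOperators

noncomputable def l1 {N : ℕ} (x : Fin N → ℝ) : ℝ := ∑ i, |x i|

noncomputable def l2 {N : ℕ} (x : Fin N → ℝ) : ℝ := Real.sqrt (∑ i, (x i) ^ 2)

noncomputable def sgn {N : ℕ} (x : Fin N → ℝ) : Fin N → ℝ := fun i => Real.sign (x i)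

noncomputable def Pmat {M N : ℕ} (A : Matrix (Fin M) (Fin N) ℝ) : Matrix (Fin N) (Fin N) ℝ :=
  1 - Aᵀ * (A * Aᵀ)⁻¹ * A

lemma Real.abs_sign_le_one (r : ℝ) : |Real.sign r| ≤ 1 := by
  rcases Real.sign_apply_eq r with h | h | h <;> simp [h]

lemma Real.mul_sign_self (r : ℝ) : r * Real.sign r = |r| := by
  rcases lt_trichotomy r 0 with h | rfl | h
  · simp [Real.sign_of_neg h, abs_of_neg h]
  · simp
  · simp [Real.sign_of_pos h, abs_of_pos h]

section Norms

variable {N : ℕ}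

lemma l2_nonneg (x : Fin N → ℝ) : 0 ≤ l2 x := Real.sqrt_nonneg _

lemma l2_sq (x : Fin N → ℝ) : l2 x ^ 2 = x ⬝ᵥ x := by
  rw [l2, Real.sq_sqrt (by positivity), dotProduct]
  simp only [sq]

lemma dotProduct_le_l2_mul_l2 (u v : Fin N → ℝ) : u ⬝ᵥ v ≤ l2 u * l2 v := by
  refine (le_abs_self _).trans ?_
  rw [← Real.sqrt_sq_eq_abs, l2, l2, ← Real.sqrt_mul (by positivity)]
  exact Real.sqrt_le_sqrt (Finset.sum_mul_sq_le_sq_mul_sq Finset.univ u v)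

lemma l1_sub_l1_le_dotProduct_sgn (x z : Fin N → ℝ) : l1 x - l1 z ≤ (x - z) ⬝ᵥ sgn x := by
  rw [l1, l1, ← Finset.sum_sub_distrib, dotProduct]
  refine Finset.sum_le_sum fun i _ => ?_
  have hz : z i * Real.sign (x i) ≤ |z i| := calc
    z i * Real.sign (x i) ≤ |z i| * |Real.sign (x i)| := (le_abs_self _).trans (abs_mul _ _).le
    _ ≤ |z i| := mul_le_of_le_one_right (abs_nonneg _) (Real.abs_sign_le_one _)
  simp only [sgn, Pi.sub_apply, sub_mul, Real.mul_sign_self]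
  linarith

lemma l2_sgn_le_sqrt (x : Fin N → ℝ) : l2 (sgn x) ≤ Real.sqrt N := by
  refine Real.sqrt_le_sqrt ?_
  calc ∑ i, sgn x i ^ 2 ≤ ∑ _i : Fin N, (1 : ℝ) :=
        Finset.sum_le_sum fun i _ => (sq_le_one_iff_abs_le_one _).mpr (Real.abs_sign_le_one _)
    _ = N := by simp

end Norms

section Projector

variable {M N : ℕ} (A : Matrix (Fin M) (Fin N) ℝ)

lemma Pmat_transpose : (Pmat A)ᵀ = Pmat A := by
  have h : ((A * Aᵀ)⁻¹)ᵀ = (A * Aᵀ)⁻¹ := by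
    rw [transpose_nonsing_inv, transpose_mul, transpose_transpose]
  simp [Pmat, transpose_sub, transpose_mul, h, Matrix.mul_assoc]

lemma dotProduct_Pmat_mulVec_comm (u v : Fin N → ℝ) :
    u ⬝ᵥ (Pmat A *ᵥ v) = (Pmat A *ᵥ u) ⬝ᵥ v := by
  rw [dotProduct_mulVec, ← mulVec_transpose, Pmat_transpose]

lemma Pmat_mulVec_of_mulVec_eq_zero {v : Fin N → ℝ} (hv : A *ᵥ v = 0) : Pmat A *ᵥ v = v := by
  simp [Pmat, sub_mulVec, ← mulVec_mulVec, hv]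

lemma Pmat_mul_self (hA : IsUnit (A * Aᵀ)) : Pmat A * Pmat A = Pmat A := by
  have hcancel : (A * Aᵀ)⁻¹ * (A * Aᵀ) = 1 :=
    nonsing_inv_mul _ ((isUnit_iff_isUnit_det _).mp hA)
  have hQ : Aᵀ * (A * Aᵀ)⁻¹ * A * (Aᵀ * (A * Aᵀ)⁻¹ * A) = Aᵀ * (A * Aᵀ)⁻¹ * A := calc
    _ = Aᵀ * ((A * Aᵀ)⁻¹ * (A * Aᵀ) * ((A * Aᵀ)⁻¹ * A)) := by simp only [Matrix.mul_assoc]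
    _ = Aᵀ * (A * Aᵀ)⁻¹ * A := by rw [hcancel, Matrix.one_mul, Matrix.mul_assoc]
  simp only [Pmat, Matrix.sub_mul, Matrix.mul_sub, Matrix.one_mul, Matrix.mul_one, hQ]
  abel

lemma l2_Pmat_mulVec_le (hA : IsUnit (A * Aᵀ)) (w : Fin N → ℝ) : l2 (Pmat A *ᵥ w) ≤ l2 w := by
  set p := Pmat A *ᵥ w
  have hpp : p ⬝ᵥ p = w ⬝ᵥ p := by
    rw [← dotProduct_Pmat_mulVec_comm, mulVec_mulVec, Pmat_mul_self A hA]
  rcases (l2_nonneg p).eq_or_lt with h0 | h0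
  · exact h0 ▸ l2_nonneg w
  · refine le_of_mul_le_mul_right ?_ h0
    calc l2 p * l2 p = w ⬝ᵥ p := by rw [← sq, l2_sq, hpp]
      _ ≤ l2 w * l2 p := dotProduct_le_l2_mul_l2 w p

lemma dotProduct_le_l2_mul_l2_Pmat_mulVec {v : Fin N → ℝ} (hv : A *ᵥ v = 0) (w : Fin N → ℝ) :
    v ⬝ᵥ w ≤ l2 v * l2 (Pmat A *ᵥ w) := by
  conv_lhs => rw [← Pmat_mulVec_of_mulVec_eq_zero A hv, ← dotProduct_Pmat_mulVec_comm]
  exact dotProduct_le_l2_mul_l2 v _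

end Projector

theorem stmt11_general {M N : ℕ} (A : Matrix (Fin M) (Fin N) ℝ) (hinv : IsUnit (A * Aᵀ))
    (y : Fin M → ℝ) (xs : Fin N → ℝ) (hxs : A *ᵥ xs = y)
    (M₀ t : ℝ)
    (hex : ∃ x : Fin N → ℝ, A *ᵥ x = y ∧ 0 < l2 (x - xs) ∧ l2 (x - xs) ≤ M₀)
    (hgrow : ∀ x : Fin N → ℝ, A *ᵥ x = y → 0 < l2 (x - xs) → l2 (x - xs) ≤ M₀ →
      l1 x - l1 xs ≥ t * l2 (x - xs))
    (Cmax : ℝ) (hC : IsGreatest (Set.range fun z : Fin N → ℝ => l2 (Pmat A *ᵥ sgn z)) Cmax) :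
    t ≤ Cmax ∧ Cmax ≤ Real.sqrt N := by
  constructor
  · obtain ⟨x, hx, hpos, hle⟩ := hex
    have hker : A *ᵥ (x - xs) = 0 := by rw [mulVec_sub, hx, hxs, sub_self]
    refine le_of_mul_le_mul_right ?_ hpos
    calc t * l2 (x - xs) ≤ l1 x - l1 xs := hgrow x hx hpos hle
      _ ≤ (x - xs) ⬝ᵥ sgn x := l1_sub_l1_le_dotProduct_sgn x xs
      _ ≤ l2 (x - xs) * l2 (Pmat A *ᵥ sgn x) := dotProduct_le_l2_mul_l2_Pmat_mulVec A hker _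
      _ ≤ Cmax * l2 (x - xs) := by
        rw [mul_comm]
        exact mul_le_mul_of_nonneg_right (hC.2 ⟨x, rfl⟩) (l2_nonneg _)
  · obtain ⟨z, rfl⟩ := hC.1
    exact (l2_Pmat_mulVec_le A hinv _).trans (l2_sgn_le_sqrt z)

theorem stmt11 {M N : ℕ} (A : Matrix (Fin M) (Fin N) ℝ) (hinv : IsUnit (A * Aᵀ))
    (y : Fin M → ℝ) (xs : Fin N → ℝ) (hxs : A *ᵥ xs = y)
    (huniq : ∀ x : Fin N → ℝ, A *ᵥ x = y → x ≠ xs → l1 xs < l1 x)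
    (M₀ t : ℝ) (hM₀ : 0 < M₀)
    (hex : ∃ x : Fin N → ℝ, A *ᵥ x = y ∧ 0 < l2 (x - xs) ∧ l2 (x - xs) ≤ M₀)
    (hgrow : ∀ x : Fin N → ℝ, A *ᵥ x = y → 0 < l2 (x - xs) → l2 (x - xs) ≤ M₀ →
      l1 x - l1 xs ≥ t * l2 (x - xs))
    (Cmax : ℝ) (hC : IsGreatest (Set.range fun z : Fin N → ℝ => l2 (Pmat A *ᵥ sgn z)) Cmax) :
    t ≤ Cmax ∧ Cmax ≤ Real.sqrt N :=
  stmt11_general A hinv y xs hxs M₀ t hex hgrow Cmax hC
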